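/- Consider the two-receiver broadcast function update problem with full-rank matrices A (m_A × n) and B (m_B × n) over F_q, sparsity ε, with m_A > 2ε and m_B > 2ε. Let H̃ generate C_A ∩ C_B, and define θ_A = min over 2ε-cores S of C_A^⊥ (|S| = 2ε) of rank(H̃|_S), θ_B analogously for C_B^⊥, and θ = min(θ_A, θ_B). Then any valid scheme (H, D_1, D_2) has communication cost ℓ = rank(H) ≥ 4ε - θ. -/

import Mathlib

/-
For a 2ε-core `S` of `A` (columns of `A` on `S` independent), validity forces
`X_A = rowSpan H ⊓ rowSpan A` to restrict onto all of `F^S`. Indeed, a vector `V` supported on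
`S` and orthogonal to `X_A` lies in `ker H + ker A`, say `V = u + z` with `H u = 0 = A z`.
Writing `V = E₁ - E₂` with `E₁, E₂` ε-sparse, the decoder cannot tell the inputs `(0, E₁)` and
`(z, E₂)` apart, so `A V = 0`, and then `V = 0` because the columns on `S` are independent.

Restricting to `S` and counting dimensions gives
`dim (X_A ⊓ X_B) ≤ rank (H̃|_S) + dim X_A - 2ε`, while `dim X_B ≥ 2ε` for the same reason at a
core of `B`. Since `rank H ≥ dim (X_A ⊔ X_B) = dim X_A + dim X_B - dim (X_A ⊓ X_B)`, we get
`rank H ≥ 4ε - rank (H̃|_S)`, and we take `S` to be a core attaining `θ_A` (resp. `θ_B`).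
-/

open Matrix

section Defs
variable {F : Type*} [Field F]

/-- Rank of the submatrix of `G` consisting of the columns indexed by `S`. -/
noncomputable def colRank {m α : Type*} [Fintype α] (G : Matrix m α F) (S : Finset α) : ℕ :=
  (G.submatrix id (fun j : S => (j : α))).rank

/-- The row space of a matrix. -/
def rowSpan {m α : Type*} (G : Matrix m α F) : Submodule F (α → F) :=
  Submodule.span F (Set.range fun i => G i)

/-- Rank of the restriction (puncturing) of a code `C` to the coordinates in `S`. -/
noncomputable def restrRank {α : Type*} (C : Submodule F (α → F)) (S : Finset α) : ℕ :=
  Module.finrank F (C.map (LinearMap.funLeft F F (fun j : S => (j : α))))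

/-- Shortening of a code on coordinates `α ⊕ β` to the coordinates `α`. -/
noncomputable def shortenSum {α β : Type*} (D : Submodule F ((α ⊕ β) → F)) :
    Submodule F (α → F) :=
  Submodule.map (LinearMap.funLeft F F Sum.inl)
    (D ⊓ (⨅ j : β, LinearMap.ker
      (LinearMap.proj (R := F) (Sum.inr j) : ((α ⊕ β) → F) →ₗ[F] F)))

/-- A valid (zero-error, worst case) scheme for the point-to-point function-update problem. -/
def IsValidScheme [DecidableEq F] {n m ℓ : ℕ} (A : Matrix (Fin m) (Fin n) F)
    (H : Matrix (Fin ℓ) (Fin n) F) (ε : ℕ)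
    (D : (Fin ℓ → F) → (Fin m → F) → (Fin m → F)) : Prop :=
  ∀ X E : Fin n → F, hammingNorm E ≤ ε →
    D (H.mulVec (X + E)) (A.mulVec X) = A.mulVec (X + E)

end Defs

open Matrix Module Function

section

variable {F : Type*} [Field F]

namespace LinearMap.BilinForm

variable {V : Type*} [AddCommGroup V] [Module F V]

theorem orthogonal_sup (B : LinearMap.BilinForm F V) (U W : Submodule F V) :
    B.orthogonal (U ⊔ W) = B.orthogonal U ⊓ B.orthogonal W := by
  refine le_antisymm (le_inf (orthogonal_le le_sup_left) (orthogonal_le le_sup_right)) ?_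
  intro v hv x hx
  obtain ⟨hU, hW⟩ := Submodule.mem_inf.mp hv
  obtain ⟨u, hu, w, hw, rfl⟩ := Submodule.mem_sup.mp hx
  simp [hU u hu, hW w hw]

theorem orthogonal_inf [FiniteDimensional F V] {B : LinearMap.BilinForm F V}
    (hB : B.Nondegenerate) (hB₀ : B.IsRefl) (U W : Submodule F V) :
    B.orthogonal (U ⊓ W) = B.orthogonal U ⊔ B.orthogonal W := by
  conv_lhs => rw [← orthogonal_orthogonal hB hB₀ U, ← orthogonal_orthogonal hB hB₀ W,
    ← orthogonal_sup, orthogonal_orthogonal hB hB₀]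

end LinearMap.BilinForm

section DotProduct

open LinearMap.BilinForm

variable {ι : Type*} [Fintype ι]

theorem dotProductBilin_isRefl : IsRefl (dotProductBilin F F : LinearMap.BilinForm F (ι → F)) :=
  fun v w h => by simpa [dotProduct_comm] using h

theorem dotProductBilin_nondegenerate :
    Nondegenerate (dotProductBilin F F : LinearMap.BilinForm F (ι → F)) := by
  classical
  exact ⟨fun v hv => dotProduct_eq_zero v (by simpa using hv),
    fun w hw => dotProduct_eq_zero w (by simpa [dotProduct_comm] using hw)⟩

theorem orthogonal_rowSpan {m : Type*} (M : Matrix m ι F) :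
    orthogonal (dotProductBilin F F) (rowSpan M) = LinearMap.ker M.mulVecLin := by
  ext v
  change rowSpan M ≤ LinearMap.ker ((dotProductBilin F F).flip v) ↔ _
  rw [rowSpan, Submodule.span_le, Set.range_subset_iff, LinearMap.mem_ker, mulVecLin_apply,
    funext_iff]
  rfl

theorem dotProduct_extend_zero {κ : Type*} [Fintype κ] {e : κ → ι} (he : Injective e)
    (v : ι → F) (w : κ → F) : v ⬝ᵥ extend e w 0 = (v ∘ e) ⬝ᵥ w :=
  (Fintype.sum_of_injective e he _ _ (fun j hj => by simp [extend_apply' _ _ _ hj])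
    (fun i => by simp [he.extend_apply])).symm

theorem mulVec_extend_zero {m κ : Type*} [Fintype κ] {e : κ → ι} (he : Injective e)
    (A : Matrix m ι F) (w : κ → F) : A *ᵥ extend e w 0 = A.submatrix id e *ᵥ w :=
  funext fun i => dotProduct_extend_zero he (A i) w

theorem hammingNorm_extend_zero_le [DecidableEq F] {κ : Type*} [Fintype κ] (e : κ → ι)
    (w : κ → F) : hammingNorm (extend e w 0) ≤ Fintype.card κ := by
  classical
  calc hammingNorm (extend e w 0) ≤ (Finset.univ.image e).card := by
        refine Finset.card_le_card fun j hj => ?_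
        by_contra hje
        simp_all [extend_apply']
    _ ≤ Fintype.card κ := Finset.card_image_le

theorem map_funLeft_eq_top {κ : Type*} [Fintype κ] {e : κ → ι} (he : Injective e)
    (P : Submodule F (ι → F))
    (h : ∀ w : κ → F, extend e w 0 ∈ orthogonal (dotProductBilin F F) P → w = 0) :
    P.map (LinearMap.funLeft F F e) = ⊤ := by
  have hperp : orthogonal (dotProductBilin F F) (P.map (LinearMap.funLeft F F e)) = ⊥ := by
    refine eq_bot_iff.mpr fun w hw => (Submodule.mem_bot F).mpr (h w ?_)
    rw [mem_orthogonal_iff] at hw ⊢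
    intro c hc
    exact (dotProduct_extend_zero he c w).trans (hw _ (Submodule.mem_map_of_mem hc))
  rw [← orthogonal_orthogonal dotProductBilin_nondegenerate dotProductBilin_isRefl
    (P.map _), hperp, orthogonal_bot]

end DotProduct

theorem Submodule.finrank_map_add_finrank_inf_ker {M N : Type*} [AddCommGroup M] [Module F M]
    [AddCommGroup N] [Module F N] [FiniteDimensional F M] (f : M →ₗ[F] N) (U : Submodule F M) :
    finrank F (U.map f) + finrank F ↥(U ⊓ LinearMap.ker f) = finrank F U := by
  have h := LinearMap.finrank_range_add_finrank_ker (f.domRestrict U)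
  have hker : (LinearMap.ker f).comap U.subtype = (U ⊓ LinearMap.ker f).comap U.subtype := by
    rw [Submodule.comap_inf, Submodule.comap_subtype_self, top_inf_eq]
  rwa [LinearMap.range_domRestrict, LinearMap.ker_domRestrict, hker,
    (Submodule.comapSubtypeEquivOfLe inf_le_left).finrank_eq] at h

theorem Submodule.finrank_inf_add_finrank_map_le {M N : Type*} [AddCommGroup M] [Module F M]
    [AddCommGroup N] [Module F N] [FiniteDimensional F M] (f : M →ₗ[F] N) (U W : Submodule F M) :
    finrank F ↥(U ⊓ W) + finrank F (U.map f) ≤ finrank F ((U ⊓ W).map f) + finrank F U := by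
  have hU := finrank_map_add_finrank_inf_ker f U
  have hUW := finrank_map_add_finrank_inf_ker f (U ⊓ W)
  have hker : finrank F ↥(U ⊓ W ⊓ LinearMap.ker f) ≤ finrank F ↥(U ⊓ LinearMap.ker f) :=
    Submodule.finrank_mono (inf_le_inf_right _ inf_le_left)
  omega

section ColRank

variable {m ι : Type*} [Fintype ι]

theorem colRank_eq_restrRank_rowSpan [Fintype m] (G : Matrix m ι F) (S : Finset ι) :
    colRank G S = restrRank (rowSpan G) S := by
  rw [colRank, rank_eq_finrank_span_row, restrRank, rowSpan, Submodule.map_span, ← Set.range_comp]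
  rfl

theorem colRank_eq_finrank_span_image (A : Matrix m ι F) (S : Finset ι) :
    colRank A S = finrank F (Submodule.span F (A.col '' S)) := by
  rw [colRank, rank_eq_finrank_span_cols]
  change finrank F (Submodule.span F (Set.range (A.col ∘ ((↑) : S → ι)))) = _
  rw [Set.range_comp, Subtype.range_coe_subtype, Finset.setOfPred_mem]

theorem colRank_eq_card_iff (A : Matrix m ι F) (S : Finset ι) :
    colRank A S = S.card ↔ LinearIndepOn F A.col (S : Set ι) := by
  rw [colRank, rank_eq_finrank_span_cols, LinearIndepOn,
    linearIndependent_iff_card_eq_finrank_span, Set.finrank]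
  simp only [Finset.coe_sort_coe, Fintype.card_coe]
  exact eq_comm

theorem exists_card_eq_colRank_eq (A : Matrix m ι F) {k : ℕ} (hk : k ≤ A.rank) :
    ∃ S : Finset ι, S.card = k ∧ colRank A S = k := by
  classical
  obtain ⟨b, -, -, hspan, hli⟩ :=
    exists_linearIndepOn_extension (linearIndepOn_empty F A.col) (Set.empty_subset Set.univ)
  set t := (Set.toFinite b).toFinset
  have ht : (t : Set ι) = b := Set.Finite.coe_toFinset _
  have hrank : A.rank ≤ t.card := by
    rw [← (colRank_eq_card_iff A t).mpr (by rwa [ht]), colRank_eq_finrank_span_image,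
      rank_eq_finrank_span_cols, ← Set.image_univ, ← Finset.coe_image]
    exact Submodule.finrank_mono (Submodule.span_le.mpr (by rwa [Finset.coe_image, ht]))
  obtain ⟨S, hSt, rfl⟩ := Finset.exists_subset_card_eq (hk.trans hrank)
  exact ⟨S, rfl, (colRank_eq_card_iff A S).mpr (hli.mono (ht ▸ Finset.coe_subset.mpr hSt))⟩

theorem injective_mulVec_of_colRank_eq_card (A : Matrix m ι F) {S : Finset ι}
    (hS : colRank A S = S.card) : Injective (A.submatrix id ((↑) : S → ι)).mulVec := by
  set M := A.submatrix id ((↑) : S → ι)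
  have h := LinearMap.finrank_range_add_finrank_ker M.mulVecLin
  rw [Module.finrank_fintype_fun_eq_card, Fintype.card_coe] at h
  change M.rank = S.card at hS
  have hker : LinearMap.ker M.mulVecLin = ⊥ :=
    Submodule.finrank_eq_zero.mp (by change M.rank + _ = _ at h; omega)
  exact LinearMap.ker_eq_bot.mp hker

end ColRank

theorem exists_sub_eq_of_hammingNorm_le_add {ι β : Type*} [Fintype ι] [AddGroup β]
    [DecidableEq β] (x : ι → β) {a b : ℕ} (hx : hammingNorm x ≤ a + b) :
    ∃ y z : ι → β, y - z = x ∧ hammingNorm y ≤ a ∧ hammingNorm z ≤ b := by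
  classical
  set T := Finset.univ.filter (fun i => x i ≠ 0)
  obtain ⟨U, hUT, hU⟩ := Finset.exists_subset_card_eq (min_le_right a T.card)
  refine ⟨U.piecewise x 0, U.piecewise 0 (-x), ?_, ?_, ?_⟩
  · ext i; by_cases hi : i ∈ U <;> simp [hi]
  · calc hammingNorm (U.piecewise x 0) ≤ U.card := by
          refine Finset.card_le_card fun i hi => ?_
          by_contra hiU
          simp_all
      _ ≤ a := hU ▸ min_le_left _ _
  · calc hammingNorm (U.piecewise 0 (-x)) ≤ (T \ U).card := by
          refine Finset.card_le_card fun i hi => ?_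
          by_cases hiU : i ∈ U <;> simp_all [T]
      _ ≤ b := by
          rw [Finset.card_sdiff_of_subset hUT, hU]
          change T.card ≤ a + b at hx
          omega

namespace IsValidScheme

variable [DecidableEq F] {n m ℓ ε : ℕ} {A : Matrix (Fin m) (Fin n) F}
  {H : Matrix (Fin ℓ) (Fin n) F} {D : (Fin ℓ → F) → (Fin m → F) → (Fin m → F)}

theorem mulVec_eq_zero_of_mem_ker_sup_ker (h : IsValidScheme A H ε D) {V : Fin n → F}
    (hV : hammingNorm V ≤ 2 * ε)
    (hVK : V ∈ LinearMap.ker H.mulVecLin ⊔ LinearMap.ker A.mulVecLin) :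
    A *ᵥ V = 0 := by
  obtain ⟨u, hu, z, hz, rfl⟩ := Submodule.mem_sup.mp hVK
  rw [LinearMap.mem_ker, mulVecLin_apply] at hu hz
  obtain ⟨E₁, E₂, hE, hE₁, hE₂⟩ := exists_sub_eq_of_hammingNorm_le_add (u + z) (two_mul ε ▸ hV)
  have hE₁' : E₁ = u + (z + E₂) := by rw [← add_assoc, ← hE, sub_add_cancel]
  have hsyndrome : H *ᵥ (0 + E₁) = H *ᵥ (z + E₂) := by
    rw [zero_add, hE₁', mulVec_add H u, hu, zero_add]
  have hside : A *ᵥ 0 = A *ᵥ z := by rw [hz, mulVec_zero]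
  have hdec : A *ᵥ (0 + E₁) = A *ᵥ (z + E₂) := by
    rw [← h 0 E₁ hE₁, ← h z E₂ hE₂, hsyndrome, hside]
  rw [← hE, mulVec_sub, ← zero_add E₁, hdec, mulVec_add, hz, zero_add, sub_self]

open LinearMap.BilinForm in
theorem restrRank_rowSpan_inf_eq_card (h : IsValidScheme A H ε D) {S : Finset (Fin n)}
    (hcard : S.card ≤ 2 * ε) (hS : colRank A S = S.card) :
    restrRank (rowSpan H ⊓ rowSpan A) S = S.card := by
  have htop : (rowSpan H ⊓ rowSpan A).map (LinearMap.funLeft F F ((↑) : S → Fin n)) = ⊤ := by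
    refine map_funLeft_eq_top Subtype.val_injective _ fun w hw =>
      injective_mulVec_of_colRank_eq_card A hS ?_
    rw [orthogonal_inf dotProductBilin_nondegenerate dotProductBilin_isRefl, orthogonal_rowSpan,
      orthogonal_rowSpan] at hw
    rw [← mulVec_extend_zero Subtype.val_injective, mulVec_zero]
    exact h.mulVec_eq_zero_of_mem_ker_sup_ker
      ((hammingNorm_extend_zero_le _ w).trans (by simpa using hcard)) hw
  rw [restrRank, htop, finrank_top, Module.finrank_fintype_fun_eq_card, Fintype.card_coe]

end IsValidScheme

theorem IsValidScheme.card_add_card_le_rank_add_restrRank [DecidableEq F] {n mA mB ℓ ε : ℕ}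
    {A : Matrix (Fin mA) (Fin n) F} {B : Matrix (Fin mB) (Fin n) F}
    {H : Matrix (Fin ℓ) (Fin n) F} {D₁ : (Fin ℓ → F) → (Fin mA → F) → (Fin mA → F)}
    {D₂ : (Fin ℓ → F) → (Fin mB → F) → (Fin mB → F)}
    (h₁ : IsValidScheme A H ε D₁) (h₂ : IsValidScheme B H ε D₂) {SA SB : Finset (Fin n)}
    (hSA : SA.card ≤ 2 * ε) (hA : colRank A SA = SA.card)
    (hSB : SB.card ≤ 2 * ε) (hB : colRank B SB = SB.card) :
    SA.card + SB.card ≤ H.rank + restrRank (rowSpan A ⊓ rowSpan B) SA := by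
  set π := LinearMap.funLeft F F ((↑) : SA → Fin n)
  set XA := rowSpan H ⊓ rowSpan A
  set XB := rowSpan H ⊓ rowSpan B
  have hXA : finrank F (XA.map π) = SA.card := h₁.restrRank_rowSpan_inf_eq_card hSA hA
  have hXB : SB.card ≤ finrank F XB :=
    (h₂.restrRank_rowSpan_inf_eq_card hSB hB).symm.le.trans (Submodule.finrank_map_le _ _)
  have hcount := Submodule.finrank_inf_add_finrank_map_le π XA XB
  have hAB : finrank F ((XA ⊓ XB).map π) ≤ restrRank (rowSpan A ⊓ rowSpan B) SA :=
    Submodule.finrank_mono (Submodule.map_mono (inf_le_inf inf_le_right inf_le_right))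
  have hsup := Submodule.finrank_sup_add_finrank_inf_eq XA XB
  have hH : finrank F ↥(XA ⊔ XB) ≤ H.rank := by
    rw [H.rank_eq_finrank_span_row]
    exact Submodule.finrank_mono (sup_le inf_le_left inf_le_left)
  omega

theorem exists_colRank_eq_sInf {m r ι : Type*} [Fintype ι] (A : Matrix m ι F)
    (G : Matrix r ι F) {k : ℕ} (hk : k ≤ A.rank) :
    ∃ S : Finset ι, S.card = k ∧ colRank A S = k ∧ colRank G S =
      sInf {x | ∃ S : Finset ι, S.card = k ∧ colRank A S = k ∧ colRank G S = x} := by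
  obtain ⟨S₀, hS₀⟩ := exists_card_eq_colRank_eq A hk
  exact Nat.sInf_mem (s := {x | ∃ S : Finset ι, S.card = k ∧ colRank A S = k ∧ colRank G S = x})
    ⟨_, S₀, hS₀.1, hS₀.2, rfl⟩

end

theorem broadcast_general_bound_general {F : Type*} [Field F] [DecidableEq F]
    {n mA mB ℓ r ε : ℕ}
    (hεA : 2 * ε < mA) (hεB : 2 * ε < mB)
    (A : Matrix (Fin mA) (Fin n) F) (hA : A.rank = mA)
    (B : Matrix (Fin mB) (Fin n) F) (hB : B.rank = mB)
    (Ht : Matrix (Fin r) (Fin n) F) (hHt : rowSpan Ht = rowSpan A ⊓ rowSpan B)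
    (H : Matrix (Fin ℓ) (Fin n) F)
    (D1 : (Fin ℓ → F) → (Fin mA → F) → (Fin mA → F))
    (D2 : (Fin ℓ → F) → (Fin mB → F) → (Fin mB → F))
    (h1 : IsValidScheme A H ε D1) (h2 : IsValidScheme B H ε D2)
    (θA θB θ : ℕ)
    (hθA : θA = sInf {x | ∃ S : Finset (Fin n), S.card = 2 * ε ∧
      colRank A S = 2 * ε ∧ colRank Ht S = x})
    (hθB : θB = sInf {x | ∃ S : Finset (Fin n), S.card = 2 * ε ∧
      colRank B S = 2 * ε ∧ colRank Ht S = x})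
    (hθ : θ = min θA θB) :
    4 * ε - θ ≤ H.rank := by
  obtain ⟨SA, hSAc, hSAr, hSAθ⟩ := exists_colRank_eq_sInf A Ht (hA ▸ hεA.le)
  obtain ⟨SB, hSBc, hSBr, hSBθ⟩ := exists_colRank_eq_sInf B Ht (hB ▸ hεB.le)
  have boundA := h1.card_add_card_le_rank_add_restrRank h2 hSAc.le (hSAr.trans hSAc.symm)
    hSBc.le (hSBr.trans hSBc.symm)
  have boundB := h2.card_add_card_le_rank_add_restrRank h1 hSBc.le (hSBr.trans hSBc.symm)
    hSAc.le (hSAr.trans hSAc.symm)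
  rw [← hHt, ← colRank_eq_restrRank_rowSpan, hSAθ, ← hθA] at boundA
  rw [inf_comm, ← hHt, ← colRank_eq_restrRank_rowSpan, hSBθ, ← hθB] at boundB
  omega

/-- broadcast converse for the general case: with
`θ_A = min { rank(H̃|_S) : S a 2ε-core of C_A⊥ }` (a `2ε`-core being a set `S` of size
`2ε` with `rank(A|_S) = 2ε`), `θ_B` defined analogously, and `θ = min(θ_A, θ_B)`,
every valid broadcast scheme has cost `rank H ≥ 4ε - θ`. -/
theorem broadcast_general_bound {F : Type*} [Field F] [Fintype F] [DecidableEq F]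
    {n mA mB ℓ r ε : ℕ} (hmA : mA ≤ n) (hmB : mB ≤ n)
    (hεA : 2 * ε < mA) (hεB : 2 * ε < mB)
    (A : Matrix (Fin mA) (Fin n) F) (hA : A.rank = mA)
    (B : Matrix (Fin mB) (Fin n) F) (hB : B.rank = mB)
    (Ht : Matrix (Fin r) (Fin n) F) (hHt : rowSpan Ht = rowSpan A ⊓ rowSpan B)
    (H : Matrix (Fin ℓ) (Fin n) F)
    (D1 : (Fin ℓ → F) → (Fin mA → F) → (Fin mA → F))
    (D2 : (Fin ℓ → F) → (Fin mB → F) → (Fin mB → F))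
    (h1 : IsValidScheme A H ε D1) (h2 : IsValidScheme B H ε D2)
    (θA θB θ : ℕ)
    (hθA : θA = sInf {x | ∃ S : Finset (Fin n), S.card = 2 * ε ∧
      colRank A S = 2 * ε ∧ colRank Ht S = x})
    (hθB : θB = sInf {x | ∃ S : Finset (Fin n), S.card = 2 * ε ∧
      colRank B S = 2 * ε ∧ colRank Ht S = x})
    (hθ : θ = min θA θB) :
    4 * ε - θ ≤ H.rank :=
  broadcast_general_bound_general hεA hεB A hA B hB Ht hHt H D1 D2 h1 h2 θA θB θ hθA hθB hθ
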